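/- arXiv:2104.13846 — 5 statements merged into one kernel-verified Lean document; each statement's English description precedes it below -/
import Mathlib

section
/- The up and down operators on Young's lattice satisfy the commutation relation DU - UD = I, where U and D are the linear maps on the free rational vector space on partitions defined by Uλ = Σ_{ν⋗λ} ν and Dλ = Σ_{μ⋖λ} μ. -/
/-- `YDCovers μ λ` means `μ ⋖ λ` in Young's lattice: `μ ⊆ λ` and `|λ| = |μ| + 1`. -/
def YDCovers (μ ν : YoungDiagram) : Prop :=
  μ.cells ⊆ ν.cells ∧ ν.cells.card = μ.cells.card + 1

lemma YD_row_lt_card {l : YoungDiagram} {i j : ℕ} (h : (i, j) ∈ l) :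
    i < l.cells.card := by
  have hsub : (Finset.range (i + 1)).image (fun k => (k, j)) ⊆ l.cells := by
    intro p hp
    simp only [Finset.mem_image, Finset.mem_range] at hp
    obtain ⟨k, hk, rfl⟩ := hp
    simpa [YoungDiagram.mem_cells] using
      l.up_left_mem (Nat.lt_succ_iff.mp hk) le_rfl h
  have hc := Finset.card_le_card hsub
  rwa [Finset.card_image_of_injective _ (fun a b hab => by
      simpa using congrArg Prod.fst hab), Finset.card_range] at hc

lemma YD_col_lt_card {l : YoungDiagram} {i j : ℕ} (h : (i, j) ∈ l) :
    j < l.cells.card := by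
  have hsub : (Finset.range (j + 1)).image (fun k => (i, k)) ⊆ l.cells := by
    intro p hp
    simp only [Finset.mem_image, Finset.mem_range] at hp
    obtain ⟨k, hk, rfl⟩ := hp
    simpa [YoungDiagram.mem_cells] using
      l.up_left_mem le_rfl (Nat.lt_succ_iff.mp hk) h
  have hc := Finset.card_le_card hsub
  rwa [Finset.card_image_of_injective _ (fun a b hab => by
      simpa using congrArg Prod.snd hab), Finset.card_range] at hc

lemma YD_finite_bounded (B : Finset (ℕ × ℕ)) :
    {l : YoungDiagram | l.cells ⊆ B}.Finite := by
  have himg : (YoungDiagram.cells '' {l : YoungDiagram | l.cells ⊆ B}).Finite := by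
    refine Set.Finite.subset (B.powerset : Finset (Finset (ℕ × ℕ))).finite_toSet ?_
    rintro s ⟨l, hl, rfl⟩
    simpa using hl
  refine Set.Finite.of_finite_image himg ?_
  intro a _ b _ hab
  cases a; cases b; simpa using hab

lemma YD_finite_down (l : YoungDiagram) : {m : YoungDiagram | YDCovers m l}.Finite :=
  (YD_finite_bounded l.cells).subset fun _ hm => hm.1

lemma YD_finite_up (l : YoungDiagram) : {n : YoungDiagram | YDCovers l n}.Finite := by
  refine (YD_finite_bounded
    (Finset.range (l.cells.card + 1) ×ˢ Finset.range (l.cells.card + 1))).subset ?_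
  rintro n ⟨_, hcard⟩ c hc
  obtain ⟨i, j⟩ := c
  have hmem : (i, j) ∈ n := by simpa [YoungDiagram.mem_cells] using hc
  have h1 : i < n.cells.card := YD_row_lt_card hmem
  have h2 : j < n.cells.card := YD_col_lt_card hmem
  simp only [Finset.mem_product, Finset.mem_range]
  omega

/-- The set 𝒰(λ) of diagrams covering `l`, as a `Finset`. -/
noncomputable def upFinset (l : YoungDiagram) : Finset YoungDiagram :=
  (YD_finite_up l).toFinset

/-- The set 𝒟(λ) of diagrams covered by `l`, as a `Finset`. -/
noncomputable def downFinset (l : YoungDiagram) : Finset YoungDiagram :=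
  (YD_finite_down l).toFinset

/-- Standard Young tableaux of shape `l`, encoded as saturated chains
`⊥ = T 0 ⋖ T 1 ⋖ ⋯ ⋖ T n = l` in Young's lattice. -/
def SYTset (l : YoungDiagram) : Set (ℕ → YoungDiagram) :=
  {T | T 0 = ⊥ ∧ (∀ i, i < l.cells.card → YDCovers (T i) (T (i + 1))) ∧
    ∀ i, l.cells.card ≤ i → T i = l}

/-- `fTab l` is the number of standard Young tableaux of shape `l`. -/
noncomputable def fTab (l : YoungDiagram) : ℕ := Nat.card (SYTset l)

/-- arm-length of a cell -/
def armLen (l : YoungDiagram) (c : ℕ × ℕ) : ℕ := l.rowLen c.1 - (c.2 + 1)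

/-- leg-length of a cell -/
def legLen (l : YoungDiagram) (c : ℕ × ℕ) : ℕ := l.colLen c.2 - (c.1 + 1)

/-- hook-length of a cell -/
def hookLen (l : YoungDiagram) (c : ℕ × ℕ) : ℕ := armLen l c + legLen l c + 1

/-- product of all hook-lengths of a diagram -/
def Hprod (l : YoungDiagram) : ℕ := ∏ c ∈ l.cells, hookLen l c

/-- For `r ⋖ k`, the unique box of `k / r`. -/
def diffBox (r k : YoungDiagram) : ℕ × ℕ := (k.cells \ r.cells).sup id

/-- Given the removed box `bm = λ/μ` and the added box `bn = ν/λ`, the unique cell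
`c_{μ,ν}` of `λ` in the row of one box and the column of the other. -/
def cellC (l : YoungDiagram) (bm bn : ℕ × ℕ) : ℕ × ℕ :=
  if (bm.1, bn.2) ∈ l.cells then (bm.1, bn.2) else (bn.1, bm.2)

/-- The field ℚ(q,t). -/
abbrev Kqt : Type := FractionRing (MvPolynomial (Fin 2) ℚ)

noncomputable def qq : Kqt := algebraMap (MvPolynomial (Fin 2) ℚ) Kqt (MvPolynomial.X 0)
noncomputable def tt : Kqt := algebraMap (MvPolynomial (Fin 2) ℚ) Kqt (MvPolynomial.X 1)

/-- `[h_κ(c)]^ℓ = 1 - q^{a} t^{ℓ+1}`. -/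
noncomputable def hkL (k : YoungDiagram) (c : ℕ × ℕ) : Kqt :=
  1 - qq ^ armLen k c * tt ^ (legLen k c + 1)

/-- `[h_κ(c)]^a = 1 - q^{a+1} t^{ℓ}`. -/
noncomputable def hkA (k : YoungDiagram) (c : ℕ × ℕ) : Kqt :=
  1 - qq ^ (armLen k c + 1) * tt ^ legLen k c

/-- `b_κ(c)`. -/
noncomputable def bqt (k : YoungDiagram) (c : ℕ × ℕ) : Kqt := hkL k c / hkA k c

/-- cells of `r` in the row of the box `k/r` (the set ℛ_{κ/ρ}). -/
def rowCells (r k : YoungDiagram) : Finset (ℕ × ℕ) :=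
  r.cells.filter (fun c => c.1 = (diffBox r k).1)

/-- cells of `r` in the column of the box `k/r` (the set 𝒞_{κ/ρ}). -/
def colCells (r k : YoungDiagram) : Finset (ℕ × ℕ) :=
  r.cells.filter (fun c => c.2 = (diffBox r k).2)

/-- `ψ_{κ/ρ}(q,t)` for a single-box skew shape `κ/ρ`. -/
noncomputable def psiE (r k : YoungDiagram) : Kqt :=
  ∏ c ∈ rowCells r k \ colCells r k, bqt r c / bqt k c

/-- `φ_{κ/ρ}(q,t)` for a single-box skew shape `κ/ρ`. -/
noncomputable def phiE (r k : YoungDiagram) : Kqt :=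
  bqt k (diffBox r k) * ∏ c ∈ colCells r k, bqt k c / bqt r c

/-- `α_{κ/ρ}`. -/
noncomputable def alphaE (r k : YoungDiagram) : Kqt :=
  (∏ c ∈ rowCells r k, hkL r c / hkL k c) * ∏ c ∈ colCells r k, hkA r c / hkA k c

/-- `ᾱ_{κ/ρ}`. -/
noncomputable def alphaBarE (r k : YoungDiagram) : Kqt :=
  (∏ c ∈ rowCells r k, hkA r c / hkA k c) * ∏ c ∈ colCells r k, hkL r c / hkL k c

/-- `η_{ν/λ/μ}` in terms of the removed box `bm = λ/μ` and the added box `bn = ν/λ`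
(rows and columns here are 0-indexed, so e.g. `r_ν - r_μ = bn.1 - bm.1`). -/
noncomputable def etaE (bm bn : ℕ × ℕ) : Kqt :=
  (1 - qq) * (1 - tt) /
    ((1 - qq ^ ((bm.2 : ℤ) - bn.2) * tt ^ ((bn.1 : ℤ) - bm.1)) *
     (1 - qq ^ ((bm.2 : ℤ) - bn.2 + 1) * tt ^ ((bn.1 : ℤ) - bm.1 - 1)))

/-- `𝒫_λ(λ → ν) = t^{r_ν - 1} α_{ν/λ}` (0-indexed: `r_ν - 1 = (diffBox l n).1`). -/
noncomputable def Ptop (l n : YoungDiagram) : Kqt :=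
  tt ^ (diffBox l n).1 * alphaE l n

/-- `𝒫_λ(μ → ν)` for `μ ∈ 𝒟(λ)`. -/
noncomputable def Pmove (l m n : YoungDiagram) : Kqt :=
  tt ^ (((diffBox l n).1 : ℤ) - (diffBox m l).1 - 1) * (alphaE l n / alphaE m l) *
    etaE (diffBox m l) (diffBox l n)

/-- `𝒫̄_λ(λ ← ν) = t^{r_ν - 1} ᾱ_{ν/λ}`. -/
noncomputable def PbarTop (l n : YoungDiagram) : Kqt :=
  tt ^ (diffBox l n).1 * alphaBarE l n

/-- `𝒫̄_λ(μ ← ν)` for `μ ∈ 𝒟(λ)`. -/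
noncomputable def PbarMove (l m n : YoungDiagram) : Kqt :=
  tt ^ (((diffBox l n).1 : ℤ) - (diffBox m l).1 - 1) * (alphaBarE l n / alphaBarE m l) *
    etaE (diffBox m l) (diffBox l n)

/-- `ψ_T(q,t)` for a standard tableau encoded as a chain of shapes. -/
noncomputable def psiT (n : ℕ) (T : ℕ → YoungDiagram) : Kqt :=
  ∏ i ∈ Finset.range n, psiE (T i) (T (i + 1))

/-- `φ_T(q,t)` for a standard tableau encoded as a chain of shapes. -/
noncomputable def phiT (n : ℕ) (T : ℕ → YoungDiagram) : Kqt :=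
  ∏ i ∈ Finset.range n, phiE (T i) (T (i + 1))

/-- The up operator `U` on ℚ𝕐. -/
noncomputable def Uop : Module.End ℚ (YoungDiagram →₀ ℚ) :=
  Finsupp.lsum ℚ fun l => LinearMap.toSpanSingleton ℚ _
    (∑ n ∈ upFinset l, Finsupp.single n (1 : ℚ))

/-- The down operator `D` on ℚ𝕐. -/
noncomputable def Dop : Module.End ℚ (YoungDiagram →₀ ℚ) :=
  Finsupp.lsum ℚ fun l => LinearMap.toSpanSingleton ℚ _
    (∑ m ∈ downFinset l, Finsupp.single m (1 : ℚ))

/-- The (q,t)-up operator `U_{q,t}`. -/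
noncomputable def Uqt : Module.End Kqt (YoungDiagram →₀ Kqt) :=
  Finsupp.lsum Kqt fun l => LinearMap.toSpanSingleton Kqt _
    (∑ n ∈ upFinset l, Finsupp.single n (psiE l n))

/-- The (q,t)-down operator `D_{q,t}`. -/
noncomputable def Dqt : Module.End Kqt (YoungDiagram →₀ Kqt) :=
  Finsupp.lsum Kqt fun l => LinearMap.toSpanSingleton Kqt _
    (∑ m ∈ downFinset l, Finsupp.single m (phiE m l))

/-!
The coefficient of `ν` in `(DU - UD) μ` is the number of common upper covers of `μ` and `ν` minus
the number of their common lower covers. For `ν ≠ μ` the only candidates are `μ ⊔ ν` and `μ ⊓ ν`,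
and `|μ ⊔ ν| + |μ ⊓ ν| = |μ| + |ν|` shows that the first is a common upper cover exactly when the
second is a common lower cover. For `ν = μ` the two counts are the numbers of addable and removable
corners of `μ`; indexing corners by their rows, the addable rows are row `0` together with the rows
just below the removable ones.
-/

open Finset

instance : DecidableRel YDCovers := fun _ _ => inferInstanceAs (Decidable (_ ∧ _))

lemma IsLowerSet.insert {α : Type*} [PartialOrder α] {s : Set α} {a : α} (hs : IsLowerSet s)
    (ha : ∀ b < a, b ∈ s) : IsLowerSet (insert a s) := by
  rintro b c hcb (rfl | hb)
  · rcases hcb.lt_or_eq with hlt | rfl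
    · exact Or.inr (ha c hlt)
    · exact Or.inl rfl
  · exact Or.inr (hs hcb hb)

lemma diffBox_eq {μ ν : YoungDiagram} {c : ℕ × ℕ} (hc : c ∉ μ.cells)
    (h : insert c μ.cells = ν.cells) : diffBox μ ν = c := by
  simp [diffBox, ← h, hc]

namespace YoungDiagram

variable {μ : YoungDiagram} {i : ℕ}

lemma mem_of_lt_addable_corner (hi : i = 0 ∨ μ.rowLen i < μ.rowLen (i - 1)) {p : ℕ × ℕ}
    (hp : p < (i, μ.rowLen i)) : p ∈ μ := by
  obtain ⟨x, y⟩ := p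
  rw [mem_iff_lt_rowLen]
  have hx : μ.rowLen i ≤ μ.rowLen x := μ.rowLen_anti x i (Prod.mk_le_mk.1 hp.le).1
  rcases Prod.mk_lt_mk.1 hp with ⟨hxi, hy⟩ | ⟨-, hy⟩
  · have : μ.rowLen (i - 1) ≤ μ.rowLen x := μ.rowLen_anti x (i - 1) (by omega)
    omega
  · omega

lemma addable_corner_of_forall_lt_mem {c : ℕ × ℕ} (hc : c ∉ μ) (h : ∀ p < c, p ∈ μ) :
    c.2 = μ.rowLen c.1 ∧ (c.1 = 0 ∨ μ.rowLen c.1 < μ.rowLen (c.1 - 1)) := by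
  obtain ⟨i, j⟩ := c
  rw [mem_iff_lt_rowLen] at hc
  have hleft : 0 < j → j - 1 < μ.rowLen i := fun hj =>
    mem_iff_lt_rowLen.1 (h _ (Prod.mk_lt_mk.2 (Or.inr ⟨le_rfl, by omega⟩)))
  have hup : 0 < i → j < μ.rowLen (i - 1) := fun hi =>
    mem_iff_lt_rowLen.1 (h _ (Prod.mk_lt_mk.2 (Or.inl ⟨by omega, le_rfl⟩)))
  dsimp only
  omega

lemma eq_of_removable_corner_le (hi : μ.rowLen (i + 1) < μ.rowLen i) {p : ℕ × ℕ}
    (hp : p ∈ μ) (hle : (i, μ.rowLen i - 1) ≤ p) : p = (i, μ.rowLen i - 1) := by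
  obtain ⟨x, y⟩ := p
  obtain ⟨hx, hy⟩ := Prod.mk_le_mk.1 hle
  rw [mem_iff_lt_rowLen] at hp
  have : μ.rowLen x ≤ μ.rowLen i := μ.rowLen_anti i x hx
  rcases hx.eq_or_lt with rfl | hlt
  · rw [Prod.mk.injEq]
    omega
  · have : μ.rowLen x ≤ μ.rowLen (i + 1) := μ.rowLen_anti (i + 1) x hlt
    omega

lemma removable_corner_of_forall_le_eq {c : ℕ × ℕ} (hc : c ∈ μ)
    (h : ∀ p ∈ μ, c ≤ p → p = c) :
    c.2 + 1 = μ.rowLen c.1 ∧ μ.rowLen (c.1 + 1) < μ.rowLen c.1 := by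
  obtain ⟨i, j⟩ := c
  rw [mem_iff_lt_rowLen] at hc
  have hright : ¬ j + 1 < μ.rowLen i := fun hj => by
    simpa using h _ (mem_iff_lt_rowLen.2 hj) (Prod.mk_le_mk.2 ⟨le_rfl, by omega⟩)
  have hdown : ¬ j < μ.rowLen (i + 1) := fun hj => by
    simpa using h _ (mem_iff_lt_rowLen.2 hj) (Prod.mk_le_mk.2 ⟨by omega, le_rfl⟩)
  dsimp only
  omega

def addCell (μ : YoungDiagram) (i : ℕ) (hi : i = 0 ∨ μ.rowLen i < μ.rowLen (i - 1)) :
    YoungDiagram where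
  cells := insert (i, μ.rowLen i) μ.cells
  isLowerSet := by
    rw [coe_insert]
    exact μ.isLowerSet.insert fun _ hp => mem_of_lt_addable_corner hi hp

def removeCell (μ : YoungDiagram) (i : ℕ) (hi : μ.rowLen (i + 1) < μ.rowLen i) :
    YoungDiagram where
  cells := μ.cells.erase (i, μ.rowLen i - 1)
  isLowerSet := by
    rw [coe_erase]
    exact μ.isLowerSet.erase fun _ hp hle => eq_of_removable_corner_le hi hp hle

lemma mk_rowLen_notMem_cells (μ : YoungDiagram) (i : ℕ) : (i, μ.rowLen i) ∉ μ.cells := by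
  simp [mem_iff_lt_rowLen]

lemma mk_rowLen_sub_one_mem_cells (h : 0 < μ.rowLen i) : (i, μ.rowLen i - 1) ∈ μ.cells := by
  simp [mem_iff_lt_rowLen, h]

lemma covers_addCell (hi : i = 0 ∨ μ.rowLen i < μ.rowLen (i - 1)) :
    YDCovers μ (μ.addCell i hi) :=
  ⟨subset_insert _ _, card_insert_of_notMem (mk_rowLen_notMem_cells μ i)⟩

lemma diffBox_addCell (hi : i = 0 ∨ μ.rowLen i < μ.rowLen (i - 1)) :
    diffBox μ (μ.addCell i hi) = (i, μ.rowLen i) :=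
  diffBox_eq (mk_rowLen_notMem_cells μ i) rfl

lemma removeCell_covers (hi : μ.rowLen (i + 1) < μ.rowLen i) :
    YDCovers (μ.removeCell i hi) μ :=
  ⟨erase_subset _ _, (card_erase_add_one (mk_rowLen_sub_one_mem_cells (by omega))).symm⟩

lemma diffBox_removeCell (hi : μ.rowLen (i + 1) < μ.rowLen i) :
    diffBox (μ.removeCell i hi) μ = (i, μ.rowLen i - 1) :=
  diffBox_eq (notMem_erase _ _) (insert_erase (mk_rowLen_sub_one_mem_cells (by omega)))

def addableRows (μ : YoungDiagram) : Finset ℕ :=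
  {i ∈ range (μ.colLen 0 + 1) | i = 0 ∨ μ.rowLen i < μ.rowLen (i - 1)}

def removableRows (μ : YoungDiagram) : Finset ℕ :=
  {i ∈ range (μ.colLen 0) | μ.rowLen (i + 1) < μ.rowLen i}

lemma lt_colLen_zero_of_rowLen_pos (h : 0 < μ.rowLen i) : i < μ.colLen 0 :=
  mem_iff_lt_colLen.1 (mem_iff_lt_rowLen.2 h)

lemma mem_addableRows : i ∈ μ.addableRows ↔ i = 0 ∨ μ.rowLen i < μ.rowLen (i - 1) := by
  refine ⟨fun hi => (mem_filter.1 hi).2, fun hi => mem_filter.2 ⟨mem_range.2 ?_, hi⟩⟩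
  rcases hi with rfl | hi
  · omega
  · have := lt_colLen_zero_of_rowLen_pos (μ := μ) (i := i - 1) (by omega)
    omega

lemma mem_removableRows : i ∈ μ.removableRows ↔ μ.rowLen (i + 1) < μ.rowLen i :=
  ⟨fun hi => (mem_filter.1 hi).2, fun hi =>
    mem_filter.2 ⟨mem_range.2 (lt_colLen_zero_of_rowLen_pos (by omega)), hi⟩⟩

lemma addableRows_eq_insert_zero :
    μ.addableRows = insert 0 (μ.removableRows.map (addRightEmbedding 1)) := by
  ext i
  cases i <;> simp [mem_addableRows, mem_removableRows]

lemma card_addableRows : #μ.addableRows = #μ.removableRows + 1 := by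
  rw [addableRows_eq_insert_zero, card_insert_of_notMem (by simp), card_map]

end YoungDiagram

open YoungDiagram

lemma mem_upFinset {μ ν : YoungDiagram} : ν ∈ upFinset μ ↔ YDCovers μ ν := by
  simp [upFinset]

lemma mem_downFinset {μ ν : YoungDiagram} : μ ∈ downFinset ν ↔ YDCovers μ ν := by
  simp [downFinset]

namespace YDCovers

variable {μ ν ρ : YoungDiagram}

lemma exists_cell (h : YDCovers μ ν) : ∃ c ∉ μ.cells, insert c μ.cells = ν.cells :=
  exists_eq_insert_iff.2 ⟨h.1, h.2.symm⟩

lemma addable_corner_diffBox (h : YDCovers μ ν) :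
    (diffBox μ ν).2 = μ.rowLen (diffBox μ ν).1 ∧
      ((diffBox μ ν).1 = 0 ∨ μ.rowLen (diffBox μ ν).1 < μ.rowLen ((diffBox μ ν).1 - 1)) := by
  obtain ⟨c, hc, hν⟩ := h.exists_cell
  rw [diffBox_eq hc hν]
  refine addable_corner_of_forall_lt_mem (by simpa using hc) fun p hp => ?_
  have hpν : p ∈ ν.cells := ν.isLowerSet hp.le (by simp [← hν])
  rw [← hν, mem_insert] at hpν
  simpa [hp.ne] using hpν

lemma removable_corner_diffBox (h : YDCovers μ ν) :
    (diffBox μ ν).2 + 1 = ν.rowLen (diffBox μ ν).1 ∧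
      ν.rowLen ((diffBox μ ν).1 + 1) < ν.rowLen (diffBox μ ν).1 := by
  obtain ⟨c, hc, hν⟩ := h.exists_cell
  rw [diffBox_eq hc hν]
  refine removable_corner_of_forall_le_eq (by simp [← mem_cells, ← hν]) fun p hp hcp => ?_
  rw [← mem_cells, ← hν, mem_insert] at hp
  exact hp.resolve_right fun hpμ => hc (μ.isLowerSet hcp hpμ)

lemma eq_sup (hμ : YDCovers μ ρ) (hν : YDCovers ν ρ) (hne : μ ≠ ν) : ρ = μ ⊔ ν := by
  have := hμ.2
  have := hν.2
  have hνμ : ¬ ν.cells ⊆ μ.cells := fun hsub =>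
    hne (YoungDiagram.ext (eq_of_subset_of_card_le hsub (by omega))).symm
  have hlt : #μ.cells < #(μ.cells ∪ ν.cells) :=
    card_lt_card <| Finset.ssubset_iff_subset_ne.2
      ⟨subset_union_left, fun h => hνμ (h ▸ subset_union_right)⟩
  refine YoungDiagram.ext ?_
  rw [cells_sup]
  exact (eq_of_subset_of_card_le (union_subset hμ.1 hν.1) (by omega)).symm

lemma eq_inf (hμ : YDCovers ρ μ) (hν : YDCovers ρ ν) (hne : μ ≠ ν) : ρ = μ ⊓ ν := by
  have := hμ.2
  have := hν.2
  have hμν : ¬ μ.cells ⊆ ν.cells := fun hsub =>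
    hne (YoungDiagram.ext (eq_of_subset_of_card_le hsub (by omega)))
  have hlt : #(μ.cells ∩ ν.cells) < #μ.cells :=
    card_lt_card <| Finset.ssubset_iff_subset_ne.2
      ⟨inter_subset_left, fun h => hμν (h ▸ inter_subset_right)⟩
  refine YoungDiagram.ext ?_
  rw [cells_inf]
  exact eq_of_subset_of_card_le (subset_inter hμ.1 hν.1) (by omega)

end YDCovers

lemma covers_sup_iff_inf_covers (μ ν : YoungDiagram) :
    YDCovers μ (μ ⊔ ν) ∧ YDCovers ν (μ ⊔ ν) ↔ YDCovers (μ ⊓ ν) μ ∧ YDCovers (μ ⊓ ν) ν := by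
  have := card_union_add_card_inter μ.cells ν.cells
  simp only [YDCovers, cells_sup, cells_inf, subset_union_left, subset_union_right,
    inter_subset_left, inter_subset_right, true_and]
  omega

lemma card_upFinset_eq_card_addableRows (μ : YoungDiagram) :
    #(upFinset μ) = #μ.addableRows := by
  refine card_bij' (fun ν _ => (diffBox μ ν).1)
    (fun i hi => addCell μ i (mem_addableRows.1 hi)) (fun ν hν => ?_) (fun i hi => ?_)
    (fun ν hν => ?_) (fun i hi => ?_)
  · exact mem_addableRows.2 (mem_upFinset.1 hν).addable_corner_diffBox.2
  · exact mem_upFinset.2 (covers_addCell _)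
  · obtain ⟨c, hc, hcells⟩ := (mem_upFinset.1 hν).exists_cell
    have hrow := (mem_upFinset.1 hν).addable_corner_diffBox.1
    refine YoungDiagram.ext ?_
    change insert ((diffBox μ ν).1, μ.rowLen (diffBox μ ν).1) μ.cells = ν.cells
    rw [diffBox_eq hc hcells] at hrow ⊢
    rw [← hrow, ← hcells]
  · simp only [diffBox_addCell]

lemma card_downFinset_eq_card_removableRows (μ : YoungDiagram) :
    #(downFinset μ) = #μ.removableRows := by
  refine card_bij' (fun ν _ => (diffBox ν μ).1)
    (fun i hi => removeCell μ i (mem_removableRows.1 hi)) (fun ν hν => ?_) (fun i hi => ?_)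
    (fun ν hν => ?_) (fun i hi => ?_)
  · exact mem_removableRows.2 (mem_downFinset.1 hν).removable_corner_diffBox.2
  · exact mem_downFinset.2 (removeCell_covers _)
  · obtain ⟨c, hc, hcells⟩ := (mem_downFinset.1 hν).exists_cell
    have hrow := (mem_downFinset.1 hν).removable_corner_diffBox.1
    refine YoungDiagram.ext ?_
    change μ.cells.erase ((diffBox ν μ).1, μ.rowLen (diffBox ν μ).1 - 1) = ν.cells
    rw [diffBox_eq hc hcells] at hrow ⊢
    rw [← hrow, Nat.add_sub_cancel, ← hcells, erase_insert hc]
  · simp only [diffBox_removeCell]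

lemma card_upFinset_eq_card_downFinset_add_one (μ : YoungDiagram) :
    #(upFinset μ) = #(downFinset μ) + 1 := by
  rw [card_upFinset_eq_card_addableRows, card_downFinset_eq_card_removableRows,
    card_addableRows]

lemma card_filter_upFinset_eq (μ ν : YoungDiagram) (hne : ν ≠ μ) :
    #{ρ ∈ upFinset μ | YDCovers ν ρ} = #{ρ ∈ downFinset μ | YDCovers ρ ν} := by
  refine card_nbij' (fun _ => μ ⊓ ν) (fun _ => μ ⊔ ν) (fun ρ hρ => ?_) (fun ρ hρ => ?_)
    (fun ρ hρ => ?_) (fun ρ hρ => ?_) <;>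
    simp only [coe_filter, Set.mem_ofPred_eq, mem_upFinset, mem_downFinset] at hρ ⊢
  · obtain ⟨hμρ, hνρ⟩ := hρ
    obtain rfl := hμρ.eq_sup hνρ hne.symm
    exact (covers_sup_iff_inf_covers μ ν).1 ⟨hμρ, hνρ⟩
  · obtain ⟨hρμ, hρν⟩ := hρ
    obtain rfl := hρμ.eq_inf hρν hne.symm
    exact (covers_sup_iff_inf_covers μ ν).2 ⟨hρμ, hρν⟩
  · exact (hρ.1.eq_sup hρ.2 hne.symm).symm
  · exact (hρ.1.eq_inf hρ.2 hne.symm).symm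

lemma Uop_single (μ : YoungDiagram) :
    Uop (Finsupp.single μ 1) = ∑ ν ∈ upFinset μ, Finsupp.single ν 1 := by
  simp [Uop]

lemma Dop_single (μ : YoungDiagram) :
    Dop (Finsupp.single μ 1) = ∑ ν ∈ downFinset μ, Finsupp.single ν 1 := by
  simp [Dop]

lemma Dop_Uop_single_apply (μ ν : YoungDiagram) :
    (Dop * Uop) (Finsupp.single μ 1) ν = #{ρ ∈ upFinset μ | YDCovers ν ρ} := by
  classical
  simp [Uop_single, Dop_single, Finsupp.finsetSum_apply, Finsupp.single_apply, mem_downFinset]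

lemma Uop_Dop_single_apply (μ ν : YoungDiagram) :
    (Uop * Dop) (Finsupp.single μ 1) ν = #{ρ ∈ downFinset μ | YDCovers ρ ν} := by
  classical
  simp [Uop_single, Dop_single, Finsupp.finsetSum_apply, Finsupp.single_apply, mem_upFinset]

/-- `DU - UD = I` on ℚ𝕐. -/
theorem up_down_commutator : Dop * Uop - Uop * Dop = 1 := by
  refine Finsupp.lhom_ext' fun μ => LinearMap.ext_ring (Finsupp.ext fun ν => ?_)
  simp only [LinearMap.comp_apply, Finsupp.lsingle_apply, LinearMap.sub_apply,
    Finsupp.sub_apply, Module.End.one_apply, Dop_Uop_single_apply, Uop_Dop_single_apply]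
  rcases eq_or_ne ν μ with rfl | hne
  · rw [filter_true_of_mem fun _ => mem_upFinset.1, filter_true_of_mem fun _ => mem_downFinset.1,
      card_upFinset_eq_card_downFinset_add_one, Finsupp.single_eq_same]
    push_cast
    ring
  · rw [card_filter_upFinset_eq μ ν hne, sub_self, Finsupp.single_eq_of_ne hne]
end

section
/- For distinct partitions λ ≠ ρ, the sets 𝒰(λ)∩𝒰(ρ) and 𝒟(λ)∩𝒟(ρ) have the same cardinality; more precisely, either both equal {λ∪ρ} and {λ∩ρ} respectively (each of size 1), or both are empty. -/
/-! Young's lattice is distributive, hence modular, and `YDCovers` is exactly its covering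
relation: if `m < n`, a minimal cell of `n` outside `m` can be added to `m`, so a cover adds a
single cell. In a lattice, two distinct elements with a common upper cover `c` have `c = a ⊔ b`,
and dually for lower covers; modularity gives `a ⋖ a ⊔ b ∧ b ⋖ a ⊔ b ↔ a ⊓ b ⋖ a ∧ a ⊓ b ⋖ b`,
so both common covers exist or neither does. -/

section CommonCovers

variable {α : Type*} [Lattice α] [IsWeakUpperModularLattice α] [IsWeakLowerModularLattice α]

theorem common_covers_eq_singleton_or_empty {a b : α} (hab : a ≠ b) :
    ({c | a ⋖ c ∧ b ⋖ c} = {a ⊔ b} ∧ {c | c ⋖ a ∧ c ⋖ b} = {a ⊓ b}) ∨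
      ({c | a ⋖ c ∧ b ⋖ c} = ∅ ∧ {c | c ⋖ a ∧ c ⋖ b} = ∅) := by
  have upper_eq_sup {c : α} (hc : a ⋖ c ∧ b ⋖ c) : c = a ⊔ b :=
    (hc.1.wcovBy.sup_eq hc.2.wcovBy hab).symm
  have lower_eq_inf {c : α} (hc : c ⋖ a ∧ c ⋖ b) : c = a ⊓ b :=
    (hc.1.wcovBy.inf_eq hc.2.wcovBy hab).symm
  by_cases hsup : a ⋖ a ⊔ b ∧ b ⋖ a ⊔ b
  · left
    have hinf : a ⊓ b ⋖ a ∧ a ⊓ b ⋖ b :=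
      ⟨inf_covBy_of_covBy_sup_of_covBy_sup_left hsup.1 hsup.2,
        inf_covBy_of_covBy_sup_of_covBy_sup_right hsup.1 hsup.2⟩
    exact ⟨Set.eq_singleton_iff_unique_mem.2 ⟨hsup, fun c => upper_eq_sup⟩,
      Set.eq_singleton_iff_unique_mem.2 ⟨hinf, fun c => lower_eq_inf⟩⟩
  · right
    refine ⟨Set.eq_empty_of_forall_notMem fun c hc => hsup ?_,
      Set.eq_empty_of_forall_notMem fun c hc => hsup ?_⟩
    · exact upper_eq_sup hc ▸ hc
    · obtain rfl := lower_eq_inf hc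
      exact ⟨covBy_sup_of_inf_covBy_of_inf_covBy_left hc.1 hc.2,
        covBy_sup_of_inf_covBy_of_inf_covBy_right hc.1 hc.2⟩

end CommonCovers

theorem YDCovers.covBy {m n : YoungDiagram} (h : YDCovers m n) : m ⋖ n := by
  have card_lt {k k' : YoungDiagram} (hk : k < k') : k.cells.card < k'.cells.card :=
    Finset.card_lt_card (YoungDiagram.cells_ssubset_iff.2 hk)
  obtain ⟨hsub, hcard⟩ := h
  refine ⟨lt_of_le_of_ne (YoungDiagram.cells_subset_iff.1 hsub) ?_, fun k hmk hkn => ?_⟩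
  · rintro rfl
    omega
  · have := card_lt hmk
    have := card_lt hkn
    omega

theorem YoungDiagram.exists_ydCovers_le_of_lt {m n : YoungDiagram} (h : m < n) :
    ∃ k, YDCovers m k ∧ k ≤ n := by
  obtain ⟨c₀, hc₀n, hc₀m⟩ := Set.exists_of_ssubset (SetLike.coe_ssubset_coe.2 h)
  obtain ⟨c, ⟨hcn, hcm⟩, hmin⟩ :=
    exists_minimal_of_wellFoundedLT (fun d => d ∈ n ∧ d ∉ m) ⟨c₀, hc₀n, hc₀m⟩
  have hcm' : c ∉ m.cells := by simpa using hcm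
  refine ⟨⟨insert c m.cells, ?_⟩, ⟨Finset.subset_insert _ _, Finset.card_insert_of_notMem hcm'⟩,
    cells_subset_iff.1 (Finset.insert_subset hcn (cells_subset_iff.2 h.le))⟩
  intro a b hab hb
  rw [Finset.coe_insert] at hb ⊢
  obtain rfl | hbm := hb
  · refine (eq_or_lt_of_le hab).imp id fun hlt => ?_
    by_contra ham
    exact hlt.not_ge (hmin ⟨n.isLowerSet hab hcn, ham⟩ hlt.le)
  · exact Or.inr (m.isLowerSet hab hbm)

theorem ydCovers_iff_covBy {m n : YoungDiagram} : YDCovers m n ↔ m ⋖ n := by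
  refine ⟨YDCovers.covBy, fun h => ?_⟩
  obtain ⟨k, hmk, hkn⟩ := YoungDiagram.exists_ydCovers_le_of_lt h.lt
  obtain rfl : k = n := hkn.eq_of_not_lt (h.2 hmk.covBy.lt)
  exact hmk

/-- for `λ ≠ ρ`, either `𝒰(λ)∩𝒰(ρ) = {λ⊔ρ}` and `𝒟(λ)∩𝒟(ρ) = {λ⊓ρ}`,
or both intersections are empty. -/
theorem up_down_intersections (l r : YoungDiagram) (hne : l ≠ r) :
    ({n : YoungDiagram | YDCovers l n ∧ YDCovers r n} = {l ⊔ r} ∧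
      {m : YoungDiagram | YDCovers m l ∧ YDCovers m r} = {l ⊓ r}) ∨
    ({n : YoungDiagram | YDCovers l n ∧ YDCovers r n} = ∅ ∧
      {m : YoungDiagram | YDCovers m l ∧ YDCovers m r} = ∅) := by
  simp only [ydCovers_iff_covBy]
  exact common_covers_eq_singleton_or_empty hne
end

section
/- For every partition λ, Σ_{ν∈𝒰(λ)} H_λ/H_ν = 1, where H_κ = Π_{c∈κ} h_κ(c) is the product of all hook-lengths of κ. -/
/-!
Let `β_i = λ_i + (R - 1 - i)`, `i < R`, be the beta-numbers of `λ` for some `R` exceeding the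
number of rows, so that `β_{R-1} = 0`. In row `i` the numbers `β_i - h(i, j)`, `j < λ_i`,
together with the `β_k`, `i < k < R`, are exactly `0, …, β_i - 1`; hence
`H_λ ∏_{i<k} (β_i - β_k) = ∏_i β_i!`.
Adding a box to row `r` replaces `β_r` by `β_r + 1`, so
`H_λ / H_ν = ∏_{i ≠ r} (β_r + 1 - β_i) / ((β_r + 1) ∏_{i ≠ r} (β_r - β_i))`,
and this expression vanishes when row `r` cannot take a box (then `β_{r-1} = β_r + 1`). So the sum
may run over all `r < R`; as `β_{R-1} = 0`, its terms are `f(β_r) / ∏_{i ≠ r} (β_r - β_i)` for the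
monic `f = ∏_{i ≠ R-1} (X + 1 - β_i)` of degree `R - 1`, and by Lagrange interpolation the sum is
the leading coefficient of `f`, which is `1`.
-/

open Finset
open scoped Nat

section Vandermonde

variable {K : Type*} [CommRing K]

def vandermondeProd (R : ℕ) (x : ℕ → K) : K := ∏ i ∈ range R, ∏ k ∈ Ioo i R, (x i - x k)

lemma prod_range_erase_eq_prod_range_mul_prod_Ioo {M : Type*} [CommMonoid M] {r R : ℕ} (hr : r < R)
    (f : ℕ → M) :
    ∏ i ∈ (range R).erase r, f i = (∏ i ∈ range r, f i) * ∏ i ∈ Ioo r R, f i := by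
  rw [← prod_union (disjoint_left.2 fun i hi hi' => by
    simp only [mem_range, mem_Ioo] at hi hi'; omega)]
  congr 1
  ext i
  simp only [mem_erase, mem_range, mem_union, mem_Ioo]
  omega

lemma vandermondeProd_ne_zero [IsDomain K] {R : ℕ} {x : ℕ → K} (hx : Set.InjOn x (Set.Iio R)) :
    vandermondeProd R x ≠ 0 :=
  prod_ne_zero_iff.2 fun i hi => prod_ne_zero_iff.2 fun k hk => by
    simp only [mem_range, mem_Ioo] at hi hk
    exact sub_ne_zero.2 (hx.ne hi hk.2 hk.1.ne)

lemma vandermondeProd_update_mul {r R : ℕ} (hr : r < R) (x : ℕ → K) (y : K) :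
    vandermondeProd R (Function.update x r y) * ∏ i ∈ (range R).erase r, (x r - x i) =
      vandermondeProd R x * ∏ i ∈ (range R).erase r, (y - x i) := by
  set x' := Function.update x r y
  have hx'r : x' r = y := Function.update_self ..
  have hx' : ∀ k, k ≠ r → x' k = x k := fun k hk => Function.update_of_ne hk ..
  have above : ∀ i ∈ range r, (∏ k ∈ Ioo i R, (x' i - x' k)) * (x r - x i) =
      (∏ k ∈ Ioo i R, (x i - x k)) * (y - x i) := by
    intro i hi
    have hir : i ≠ r := (mem_range.1 hi).ne
    have hr' : r ∈ Ioo i R := mem_Ioo.2 ⟨mem_range.1 hi, hr⟩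
    rw [← mul_prod_erase _ _ hr', ← mul_prod_erase _ _ hr',
      prod_congr rfl fun k hk => by rw [hx' k (ne_of_mem_erase hk), hx' i hir], hx'r, hx' i hir]
    ring
  have below : ∀ i ∈ Ioo r R, ∏ k ∈ Ioo i R, (x' i - x' k) = ∏ k ∈ Ioo i R, (x i - x k) :=
    fun i hi => prod_congr rfl fun k hk => by
      simp only [mem_Ioo] at hi hk
      rw [hx' i (by omega), hx' k (by omega)]
  have hrow : ∏ k ∈ Ioo r R, (x' r - x' k) = ∏ k ∈ Ioo r R, (y - x k) :=
    prod_congr rfl fun k hk => by rw [hx'r, hx' k (mem_Ioo.1 hk).1.ne']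
  have habove := prod_congr rfl above
  rw [prod_mul_distrib, prod_mul_distrib] at habove
  simp only [vandermondeProd, ← mul_prod_erase _ _ (mem_range.2 hr),
    prod_range_erase_eq_prod_range_mul_prod_Ioo hr, prod_congr rfl below, hrow]
  linear_combination ((∏ k ∈ Ioo r R, (y - x k)) * (∏ i ∈ Ioo r R, ∏ k ∈ Ioo i R, (x i - x k)) *
    ∏ i ∈ Ioo r R, (x r - x i)) * habove

end Vandermonde

theorem sum_prod_add_one_sub_div_eq_one {ι K : Type*} [DecidableEq ι] [Field K] {s : Finset ι}
    {x : ι → K} (hx : Set.InjOn x s) {i₀ : ι} (hi₀ : i₀ ∈ s) (hx₀ : x i₀ = 0)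
    (hne : ∀ r ∈ s, x r + 1 ≠ 0) :
    ∑ r ∈ s, (∏ i ∈ s.erase r, (x r + 1 - x i)) / ((x r + 1) * ∏ i ∈ s.erase r, (x r - x i))
      = 1 := by
  set f := Lagrange.nodal (s.erase i₀) (fun i => x i - 1)
  have hdeg : (#s : WithBot ℕ) = f.degree + 1 := by
    rw [Lagrange.degree_nodal, card_erase_of_mem hi₀]
    norm_cast
    have := card_pos.2 ⟨i₀, hi₀⟩
    omega
  refine (sum_congr rfl fun r hr => ?_).trans
    ((Lagrange.leadingCoeff_eq_sum hx hdeg).symm.trans Lagrange.nodal_monic.leadingCoeff)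
  have hf : ∏ i ∈ s.erase r, (x r + 1 - x i) = (x r + 1) * f.eval (x r) := by
    rw [prod_erase _ (by ring), ← mul_prod_erase _ _ hi₀, hx₀, Lagrange.eval_nodal, sub_zero]
    congr 1
    exact prod_congr rfl fun i _ => by ring
  rw [hf, mul_div_mul_left _ _ (hne r hr)]

namespace YoungDiagram

def Addable (μ : YoungDiagram) (r : ℕ) : Prop := r = 0 ∨ μ.rowLen r < μ.rowLen (r - 1)

instance (μ : YoungDiagram) : DecidablePred μ.Addable := fun _ =>
  inferInstanceAs (Decidable (_ ∨ _))

variable {μ : YoungDiagram} {r R i : ℕ}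

lemma isLowerSet_insert_corner (h : μ.Addable r) :
    IsLowerSet (↑(insert (r, μ.rowLen r) μ.cells) : Set (ℕ × ℕ)) := by
  rintro p ⟨i, j⟩ hqp hp
  simp only [coe_insert, Set.mem_insert_iff, mem_coe, mem_cells] at hp ⊢
  rcases hp with rfl | hp
  · obtain ⟨hi, hj⟩ := Prod.mk_le_mk.1 hqp
    rcases hi.eq_or_lt with rfl | hir
    · rcases hj.eq_or_lt with rfl | hj
      · exact Or.inl rfl
      · exact Or.inr (mem_iff_lt_rowLen.2 hj)
    · have := μ.rowLen_anti i (r - 1) (by omega)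
      exact Or.inr (mem_iff_lt_rowLen.2 (by rcases h with h | h <;> omega))
  · exact Or.inr (μ.isLowerSet hqp hp)

def addBox (μ : YoungDiagram) (r : ℕ) : YoungDiagram :=
  if h : μ.Addable r then ⟨insert (r, μ.rowLen r) μ.cells, isLowerSet_insert_corner h⟩ else μ

lemma corner_notMem (μ : YoungDiagram) (r : ℕ) : (r, μ.rowLen r) ∉ μ := fun h =>
  (mem_iff_lt_rowLen.1 h).false

lemma cells_addBox (h : μ.Addable r) : (μ.addBox r).cells = insert (r, μ.rowLen r) μ.cells := by
  rw [addBox, dif_pos h]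

lemma rowLen_addBox (h : μ.Addable r) (i : ℕ) :
    (μ.addBox r).rowLen i = μ.rowLen i + if i = r then 1 else 0 := by
  rw [rowLen_eq_card, rowLen_eq_card, row, row, cells_addBox h, filter_insert]
  by_cases hir : i = r
  · subst hir
    rw [if_pos rfl, if_pos rfl,
      card_insert_of_notMem fun hc => corner_notMem μ i (mem_filter.1 hc).1]
  · rw [if_neg (Ne.symm hir), if_neg hir, add_zero]

lemma covers_addBox (h : μ.Addable r) : YDCovers μ (μ.addBox r) := by
  rw [YDCovers, cells_addBox h, card_insert_of_notMem (corner_notMem μ r)]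
  exact ⟨subset_insert _ _, rfl⟩

lemma addBox_injOn (μ : YoungDiagram) : Set.InjOn μ.addBox {r | μ.Addable r} := by
  intro r hr r' hr' he
  have := rowLen_addBox hr r
  rw [he, rowLen_addBox hr' r] at this
  by_contra hne
  rw [if_pos rfl, if_neg hne] at this
  omega

lemma addable_le_colLen (h : μ.Addable r) : r ≤ μ.colLen 0 := by
  rcases h with rfl | h
  · exact Nat.zero_le _
  · have := mem_iff_lt_colLen.1 (mem_iff_lt_rowLen.2 (Nat.zero_lt_of_lt h) : (r - 1, 0) ∈ μ)
    omega

lemma exists_addable_eq_addBox {ν : YoungDiagram} (hc : YDCovers μ ν) :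
    ∃ r, μ.Addable r ∧ ν = μ.addBox r := by
  obtain ⟨hsub, hcard⟩ := hc
  obtain ⟨⟨r, c⟩, hdiff⟩ := card_eq_one.1 (show (ν.cells \ μ.cells).card = 1 by
    rw [card_sdiff_of_subset hsub]; omega)
  have hν : ν.cells = insert (r, c) μ.cells := by
    rw [insert_eq, ← hdiff, sdiff_union_of_subset hsub]
  have hmem : ∀ p, p ∈ ν ↔ p = (r, c) ∨ p ∈ μ := fun p => by
    rw [← mem_cells, hν, mem_insert, mem_cells]
  have hnew : (r, c) ∈ ν.cells \ μ.cells := hdiff ▸ mem_singleton_self _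
  rw [mem_sdiff, mem_cells, mem_cells] at hnew
  obtain ⟨hrν, hrμ⟩ := hnew
  have hc : c = μ.rowLen r := by
    refine le_antisymm (not_lt.1 fun hlt => ?_) (not_lt.1 (hrμ ∘ mem_iff_lt_rowLen.2))
    rcases (hmem _).1 (ν.up_left_mem le_rfl hlt.le hrν) with h | h
    · simp only [Prod.mk.injEq, true_and] at h; omega
    · exact corner_notMem μ r h
  subst hc
  have hadd : μ.Addable r := by
    refine (Nat.eq_zero_or_pos r).imp id fun hr => ?_
    rcases (hmem _).1 (ν.up_left_mem (Nat.sub_le r 1) le_rfl hrν) with h | h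
    · simp only [Prod.mk.injEq, and_true] at h; omega
    · exact mem_iff_lt_rowLen.1 h
  exact ⟨r, hadd, YoungDiagram.ext (hν.trans (cells_addBox hadd).symm)⟩

lemma mem_upFinset {ν : YoungDiagram} : ν ∈ upFinset μ ↔ YDCovers μ ν :=
  Set.Finite.mem_toFinset _

lemma upFinset_eq_image [DecidableEq YoungDiagram] (μ : YoungDiagram) :
    upFinset μ = {r ∈ range (μ.colLen 0 + 1) | μ.Addable r}.image μ.addBox := by
  ext ν
  simp only [mem_upFinset, mem_image, mem_filter, mem_range]
  constructor
  · rintro hc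
    obtain ⟨r, hr, rfl⟩ := exists_addable_eq_addBox hc
    exact ⟨r, ⟨Nat.lt_succ_of_le (addable_le_colLen hr), hr⟩, rfl⟩
  · rintro ⟨r, ⟨-, hr⟩, rfl⟩
    exact covers_addBox hr

def betaNum (μ : YoungDiagram) (R i : ℕ) : ℕ := μ.rowLen i + (R - 1 - i)

lemma betaNum_strictAntiOn (μ : YoungDiagram) (R : ℕ) :
    StrictAntiOn (μ.betaNum R) (Set.Iio R) := fun i _ k hk hik => by
  have := μ.rowLen_anti i k hik.le
  rw [Set.mem_Iio] at hk
  unfold betaNum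
  omega

lemma rowLen_eq_zero (h : μ.colLen 0 ≤ i) : μ.rowLen i = 0 :=
  Nat.eq_zero_of_not_pos fun hpos => by
    have := mem_iff_lt_colLen.1 (mem_iff_lt_rowLen.2 hpos : (i, 0) ∈ μ)
    omega

lemma colLen_le_of_rowLen_eq_zero (hR : μ.rowLen R = 0) (j : ℕ) : μ.colLen j ≤ R :=
  not_lt.1 fun h => by
    have := mem_iff_lt_rowLen.1 (mem_iff_lt_colLen.2 h)
    omega

lemma hookLen_add_eq_betaNum (hR : μ.rowLen R = 0) {j : ℕ} (h : (i, j) ∈ μ) :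
    hookLen μ (i, j) + (R + j - μ.colLen j) = μ.betaNum R i := by
  have := mem_iff_lt_rowLen.1 h
  have := mem_iff_lt_colLen.1 h
  have := colLen_le_of_rowLen_eq_zero hR j
  simp only [hookLen, armLen, legLen, betaNum]
  omega

lemma strictMono_add_sub_colLen (hR : μ.rowLen R = 0) : StrictMono fun j => R + j - μ.colLen j :=
  fun j _ h => by
    have := μ.colLen_anti j _ h.le
    have := colLen_le_of_rowLen_eq_zero hR j
    dsimp only
    omega

lemma disjoint_image_add_sub_colLen_image_betaNum (hR : μ.rowLen R = 0) :
    Disjoint ((range (μ.rowLen i)).image fun j => R + j - μ.colLen j)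
      ((Ioo i R).image (μ.betaNum R)) := by
  simp only [disjoint_left, mem_image, mem_range, mem_Ioo, not_exists, not_and]
  rintro _ ⟨j, hj, rfl⟩ k ⟨hik, hkR⟩ hjk
  have := colLen_le_of_rowLen_eq_zero hR j
  by_cases hkj : (k, j) ∈ μ
  · have := mem_iff_lt_rowLen.1 hkj
    have := mem_iff_lt_colLen.1 hkj
    unfold betaNum at hjk
    omega
  · rw [mem_iff_lt_rowLen, not_lt] at hkj
    have : μ.colLen j ≤ k := not_lt.1 fun h => by
      have := mem_iff_lt_rowLen.1 (mem_iff_lt_colLen.2 h)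
      omega
    unfold betaNum at hjk
    omega

lemma image_union_image_betaNum (hR : μ.rowLen R = 0) (hi : i < R) :
    (range (μ.rowLen i)).image (fun j => R + j - μ.colLen j) ∪ (Ioo i R).image (μ.betaNum R)
      = range (μ.betaNum R i) := by
  refine eq_of_subset_of_card_le (union_subset ?_ ?_) ?_
  · simp only [subset_iff, mem_image, mem_range]
    rintro _ ⟨j, hj, rfl⟩
    have := hookLen_add_eq_betaNum hR (mem_iff_lt_rowLen.2 hj)
    have : 0 < hookLen μ (i, j) := Nat.succ_pos _
    omega
  · simp only [subset_iff, mem_image, mem_range, mem_Ioo]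
    rintro _ ⟨k, ⟨hik, hkR⟩, rfl⟩
    exact μ.betaNum_strictAntiOn R (Set.mem_Iio.2 hi) hkR hik
  · rw [card_union_of_disjoint (disjoint_image_add_sub_colLen_image_betaNum hR),
      card_image_of_injective _ (strictMono_add_sub_colLen hR).injective,
      card_image_of_injOn ((μ.betaNum_strictAntiOn R).injOn.mono fun k hk => (mem_Ioo.1 hk).2),
      card_range, card_range, Nat.card_Ioo, betaNum]
    omega

lemma prod_hookLen_row_mul_prod_sub_betaNum (hR : μ.rowLen R = 0) (hi : i < R) :
    (∏ j ∈ range (μ.rowLen i), hookLen μ (i, j)) *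
      ∏ k ∈ Ioo i R, (μ.betaNum R i - μ.betaNum R k) = (μ.betaNum R i)! := by
  rw [← Nat.descFactorial_self, Nat.descFactorial_eq_prod_range, ← image_union_image_betaNum hR hi,
    prod_union (disjoint_image_add_sub_colLen_image_betaNum hR),
    prod_image fun _ _ _ _ h => (strictMono_add_sub_colLen hR).injective h,
    prod_image ((μ.betaNum_strictAntiOn R).injOn.mono fun k hk => (mem_Ioo.1 hk).2)]
  congr 1
  refine prod_congr rfl fun j hj => ?_
  have := hookLen_add_eq_betaNum hR (mem_iff_lt_rowLen.2 (mem_range.1 hj))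
  omega

lemma Hprod_eq_prod_range (hR : μ.rowLen R = 0) :
    Hprod μ = ∏ i ∈ range R, ∏ j ∈ range (μ.rowLen i), hookLen μ (i, j) := by
  rw [Hprod, ← prod_fiberwise_of_maps_to (g := Prod.fst) (t := range R)]
  · refine prod_congr rfl fun i _ => ?_
    rw [← row, row_eq_prod, prod_product, prod_singleton]
  · rintro ⟨i, j⟩ h
    exact mem_range.2 (lt_of_lt_of_le (mem_iff_lt_colLen.1 (μ.up_left_mem le_rfl (Nat.zero_le j)
      ((mem_cells _).1 h))) (colLen_le_of_rowLen_eq_zero hR 0))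

theorem Hprod_mul_vandermondeProd {K : Type*} [CommRing K] (hR : μ.rowLen R = 0) :
    (Hprod μ : K) * vandermondeProd R (fun i => (μ.betaNum R i : K)) =
      ∏ i ∈ range R, ((μ.betaNum R i)! : K) := by
  rw [Hprod_eq_prod_range hR, Nat.cast_prod, vandermondeProd, ← prod_mul_distrib]
  refine prod_congr rfl fun i hi => ?_
  rw [← prod_hookLen_row_mul_prod_sub_betaNum hR (mem_range.1 hi), Nat.cast_mul, Nat.cast_prod,
    Nat.cast_prod]
  congr 1
  refine prod_congr rfl fun k hk => (Nat.cast_sub ?_).symm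
  exact (μ.betaNum_strictAntiOn R (Set.mem_Iio.2 (mem_range.1 hi)) (mem_Ioo.1 hk).2
    (mem_Ioo.1 hk).1).le

lemma betaNum_addBox (h : μ.Addable r) (R i : ℕ) :
    (μ.addBox r).betaNum R i = μ.betaNum R i + if i = r then 1 else 0 := by
  rw [betaNum, betaNum, rowLen_addBox h]
  ring

lemma prod_factorial_betaNum_addBox (h : μ.Addable r) (hr : r < R) :
    ∏ i ∈ range R, ((μ.addBox r).betaNum R i)! =
      (μ.betaNum R r + 1) * ∏ i ∈ range R, (μ.betaNum R i)! := by
  rw [← mul_prod_erase _ _ (mem_range.2 hr), ← mul_prod_erase _ _ (mem_range.2 hr),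
    betaNum_addBox h, if_pos rfl, Nat.factorial_succ, prod_congr rfl fun i hi => by
      rw [betaNum_addBox h, if_neg (ne_of_mem_erase hi), add_zero]]
  ring

theorem Hprod_div_Hprod_addBox {K : Type*} [Field K] [CharZero K] (h : μ.Addable r) (hr : r < R)
    (hR : μ.rowLen R = 0) :
    (Hprod μ : K) / Hprod (μ.addBox r) =
      (∏ i ∈ (range R).erase r, ((μ.betaNum R r : K) + 1 - μ.betaNum R i)) /
        (((μ.betaNum R r : K) + 1) *
          ∏ i ∈ (range R).erase r, ((μ.betaNum R r : K) - μ.betaNum R i)) := by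
  have hfac := congrArg (Nat.cast : ℕ → K) (prod_factorial_betaNum_addBox h hr)
  push_cast at hfac
  set β : ℕ → K := fun i => (μ.betaNum R i : K)
  have hβ : (fun i => ((μ.addBox r).betaNum R i : K)) = Function.update β r (β r + 1) := by
    funext i
    rcases eq_or_ne i r with rfl | hi
    · simp [β, betaNum_addBox h]
    · simp [β, betaNum_addBox h, hi]
  have hμ := Hprod_mul_vandermondeProd (K := K) hR
  have hν := Hprod_mul_vandermondeProd (K := K) (show (μ.addBox r).rowLen R = 0 by
    rw [rowLen_addBox h, if_neg hr.ne', hR])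
  rw [hβ, hfac] at hν
  have hupd := vandermondeProd_update_mul hr β (β r + 1)
  set V := vandermondeProd R β
  set V' := vandermondeProd R (Function.update β r (β r + 1))
  set F := ∏ i ∈ range R, ((μ.betaNum R i)! : K)
  set E := ∏ i ∈ (range R).erase r, (β r - β i)
  set N := ∏ i ∈ (range R).erase r, (β r + 1 - β i)
  have hinj : Set.InjOn β (Set.Iio R) :=
    Nat.cast_injective.comp_injOn (μ.betaNum_strictAntiOn R).injOn
  have hb : β r + 1 ≠ 0 := Nat.cast_add_one_ne_zero _
  have hF : F ≠ 0 := prod_ne_zero_iff.2 fun i _ => Nat.cast_ne_zero.2 (Nat.factorial_ne_zero _)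
  have hE : E ≠ 0 := prod_ne_zero_iff.2 fun i hi => sub_ne_zero.2 <|
    hinj.ne hr (mem_range.1 (mem_of_mem_erase hi)) (ne_of_mem_erase hi).symm
  have hV : V ≠ 0 := vandermondeProd_ne_zero hinj
  have hV' : V' ≠ 0 := right_ne_zero_of_mul (hν ▸ mul_ne_zero hb hF)
  have hHν : (Hprod (μ.addBox r) : K) ≠ 0 := left_ne_zero_of_mul (hν ▸ mul_ne_zero hb hF)
  rw [div_eq_div_iff hHν (mul_ne_zero hb hE)]
  apply mul_right_cancel₀ (mul_ne_zero hV hV')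
  linear_combination ((β r + 1) * E * V') * hμ - (N * V) * hν + ((β r + 1) * F) * hupd

lemma prod_betaNum_add_one_sub_eq_zero {K : Type*} [CommRing K] (h : ¬ μ.Addable r)
    (hr : r < R) : ∏ i ∈ (range R).erase r, ((μ.betaNum R r : K) + 1 - μ.betaNum R i) = 0 := by
  obtain ⟨hr0, hrow⟩ := not_or.1 h
  have := μ.rowLen_anti (r - 1) r (Nat.sub_le r 1)
  have hβ : μ.betaNum R (r - 1) = μ.betaNum R r + 1 := by
    unfold betaNum
    omega
  refine prod_eq_zero (i := r - 1) (mem_erase.2 ⟨by omega, mem_range.2 (by omega)⟩) ?_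
  rw [hβ]
  push_cast
  ring

end YoungDiagram

/-- `Σ_{ν∈𝒰(λ)} H_λ / H_ν = 1`. -/
theorem hook_ratio_sum (l : YoungDiagram) :
    ∑ k ∈ upFinset l, (Hprod l : ℚ) / (Hprod k : ℚ) = 1 := by
  classical
  rw [l.upFinset_eq_image]
  set R := l.colLen 0 + 1
  have hinj : Set.InjOn l.addBox ↑{r ∈ range R | l.Addable r} :=
    l.addBox_injOn.mono fun r hr => (mem_filter.1 hr).2
  rw [sum_image hinj, sum_congr rfl fun r hr => YoungDiagram.Hprod_div_Hprod_addBox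
      (mem_filter.1 hr).2 (mem_range.1 (mem_filter.1 hr).1) (l.rowLen_eq_zero (l.colLen 0).le_succ),
    sum_filter_of_ne fun r hr hne => not_not.1 fun h => hne <| by
      rw [YoungDiagram.prod_betaNum_add_one_sub_eq_zero h (mem_range.1 hr), zero_div]]
  refine sum_prod_add_one_sub_div_eq_one ?_ (mem_range.2 (l.colLen 0).lt_succ_self) ?_
    fun r _ => Nat.cast_add_one_ne_zero _
  · rw [coe_range]
    exact Nat.cast_injective.comp_injOn (l.betaNum_strictAntiOn R).injOn
  · simp [YoungDiagram.betaNum, l.rowLen_eq_zero le_rfl]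
end

section
/- Let λ = (h^v) be the rectangular partition of width h ≥ 1 and height v ≥ 1, μ = (h^{v−1}, h−1), ν₁ = (h+1, h^{v−1}), ν₂ = (h^v, 1). Then 𝒫_λ(λ→ν₁) = (1−t^v)/(1−q^h t^v), 𝒫_λ(λ→ν₂) = t^v(1−q^h)/(1−q^h t^v), 𝒫_λ(μ→ν₁) = qt^{v−1}(1−q^{h−1}t)/(1−q^h t^v), 𝒫_λ(μ→ν₂) = (1−qt^{v−1})/(1−q^h t^v); in particular 𝒫_λ(λ→ν₁)+𝒫_λ(λ→ν₂) = 1 and 𝒫_λ(μ→ν₁)+𝒫_λ(μ→ν₂) = 1. -/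
/-!
Adding a box to a diagram raises by one the arm of every cell to its left and the leg of every
cell above it, and changes no other arm or leg; so `α_{κ/ρ}` is a product over the row and the
column of the new box of factors depending only on the hooks of `ρ`. For a rectangle, and for a
rectangle with its corner removed, the arm lengths along that row (resp. the leg lengths along
that column) run through consecutive integers while the other length is constant, so each `α` is
a telescoping product. The factors `η` and the powers of `t` are explicit, and the four values
follow by arithmetic in `ℚ(q,t)`.
-/

open Finset

lemma qq_ne_zero : qq ≠ 0 := by
  simp [qq, MvPolynomial.X_ne_zero]

lemma tt_ne_zero : tt ≠ 0 := by
  simp [tt, MvPolynomial.X_ne_zero]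

lemma one_sub_qq_pow_mul_tt_pow_ne_zero {a b : ℕ} (hab : a ≠ 0 ∨ b ≠ 0) :
    1 - qq ^ a * tt ^ b ≠ 0 := by
  have hcoeff : MvPolynomial.constantCoeff
      (1 - MvPolynomial.X 0 ^ a * MvPolynomial.X 1 ^ b : MvPolynomial (Fin 2) ℚ) = 1 := by
    rcases hab with hab | hab <;> simp [hab]
  have hmap : 1 - qq ^ a * tt ^ b = algebraMap (MvPolynomial (Fin 2) ℚ) Kqt
      (1 - MvPolynomial.X 0 ^ a * MvPolynomial.X 1 ^ b) := by
    simp [qq, tt]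
  rw [hmap, Ne, IsFractionRing.to_map_eq_zero_iff]
  rintro h0
  simp [h0] at hcoeff

lemma one_sub_qq_pow_ne_zero {a : ℕ} (ha : a ≠ 0) : 1 - qq ^ a ≠ 0 := by
  simpa using one_sub_qq_pow_mul_tt_pow_ne_zero (b := 0) (.inl ha)

lemma one_sub_tt_pow_ne_zero {b : ℕ} (hb : b ≠ 0) : 1 - tt ^ b ≠ 0 := by
  simpa using one_sub_qq_pow_mul_tt_pow_ne_zero (a := 0) (.inr hb)

lemma one_sub_qq_pow_mul_tt_ne_zero (a : ℕ) : 1 - qq ^ a * tt ≠ 0 := by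
  simpa using one_sub_qq_pow_mul_tt_pow_ne_zero (a := a) (b := 1) (.inr one_ne_zero)

lemma one_sub_qq_mul_tt_pow_ne_zero (b : ℕ) : 1 - qq * tt ^ b ≠ 0 := by
  simpa using one_sub_qq_pow_mul_tt_pow_ne_zero (a := 1) (b := b) (.inl one_ne_zero)

lemma one_sub_qq_ne_zero : 1 - qq ≠ 0 := by
  simpa using one_sub_qq_pow_ne_zero one_ne_zero

lemma one_sub_tt_ne_zero : 1 - tt ≠ 0 := by
  simpa using one_sub_tt_pow_ne_zero one_ne_zero

theorem Finset.prod_range_reflect_div_of_ne_zero {G : Type*} [CommGroupWithZero G] {f : ℕ → G}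
    {n : ℕ} (hf : ∀ k ≤ n, f k ≠ 0) : ∏ j ∈ range n, f (n - (j + 1)) / f (n - j) = f 0 / f n := by
  induction n with
  | zero => simp [div_self (hf 0 le_rfl)]
  | succ n ih =>
    rw [prod_range_succ']
    simp only [Nat.add_sub_add_right, Nat.add_sub_cancel, Nat.sub_zero]
    rw [ih fun k hk => hf k (by omega), div_mul_div_cancel₀ (hf n (by omega))]

namespace YoungDiagram

lemma rowLen_eq_of_forall_mem_iff {μ : YoungDiagram} {i n : ℕ}
    (h : ∀ j, (i, j) ∈ μ ↔ j < n) : μ.rowLen i = n :=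
  eq_of_forall_lt_iff fun j => mem_iff_lt_rowLen.symm.trans (h j)

lemma colLen_eq_of_forall_mem_iff {μ : YoungDiagram} {j n : ℕ}
    (h : ∀ i, (i, j) ∈ μ ↔ i < n) : μ.colLen j = n :=
  eq_of_forall_lt_iff fun i => mem_iff_lt_colLen.symm.trans (h i)

variable {r k : YoungDiagram} {c : ℕ × ℕ}

lemma mem_of_cells_eq_insert (hk : k.cells = insert c r.cells) {x : ℕ × ℕ} :
    x ∈ k ↔ x = c ∨ x ∈ r := by
  rw [← mem_cells, hk, mem_insert, mem_cells]

lemma cells_transpose_eq_insert (hk : k.cells = insert c r.cells) :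
    k.transpose.cells = insert c.swap r.transpose.cells := by
  ext x
  simp only [mem_cells, mem_insert, mem_transpose, mem_of_cells_eq_insert hk,
    Prod.swap_eq_iff_eq_swap]

lemma rowLen_of_cells_eq_insert_of_ne (hk : k.cells = insert c r.cells) {i : ℕ} (hi : i ≠ c.1) :
    k.rowLen i = r.rowLen i :=
  rowLen_eq_of_forall_mem_iff fun j => by
    rw [mem_of_cells_eq_insert hk, mem_iff_lt_rowLen, or_iff_right]
    rintro rfl
    exact hi rfl

lemma colLen_of_cells_eq_insert_of_ne (hk : k.cells = insert c r.cells) {j : ℕ} (hj : j ≠ c.2) :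
    k.colLen j = r.colLen j := by
  rw [← rowLen_transpose, ← rowLen_transpose, rowLen_of_cells_eq_insert_of_ne
    (cells_transpose_eq_insert hk) hj]

lemma rowLen_of_cells_eq_insert (hk : k.cells = insert c r.cells) (hc : c ∉ r) :
    r.rowLen c.1 = c.2 := by
  obtain ⟨i, j⟩ := c
  refine rowLen_eq_of_forall_mem_iff fun j' => ⟨fun h => ?_, fun h => ?_⟩
  · by_contra! hle
    exact hc (r.up_left_mem le_rfl hle h)
  · have hk' : (i, j') ∈ k := k.up_left_mem le_rfl h.le ((mem_of_cells_eq_insert hk).2 (.inl rfl))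
    refine ((mem_of_cells_eq_insert hk).1 hk').resolve_left ?_
    simp [h.ne]


lemma rowLen_succ_of_cells_eq_insert (hk : k.cells = insert c r.cells) (hc : c ∉ r) :
    k.rowLen c.1 = c.2 + 1 := by
  refine rowLen_eq_of_forall_mem_iff fun j => ?_
  rw [mem_of_cells_eq_insert hk, mem_iff_lt_rowLen, rowLen_of_cells_eq_insert hk hc,
    Nat.lt_succ_iff_lt_or_eq, or_comm, Prod.ext_iff]
  simp

lemma colLen_of_cells_eq_insert (hk : k.cells = insert c r.cells) (hc : c ∉ r) :
    r.colLen c.2 = c.1 := by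
  rw [← rowLen_transpose]
  exact rowLen_of_cells_eq_insert (cells_transpose_eq_insert hk) (by simpa [mem_transpose])

lemma colLen_succ_of_cells_eq_insert (hk : k.cells = insert c r.cells) (hc : c ∉ r) :
    k.colLen c.2 = c.1 + 1 := by
  rw [← rowLen_transpose]
  exact rowLen_succ_of_cells_eq_insert (cells_transpose_eq_insert hk) (by simpa [mem_transpose])

end YoungDiagram

open YoungDiagram

section AddBox

variable {r k : YoungDiagram} {i j : ℕ}

lemma diffBox_of_cells_eq_insert {c : ℕ × ℕ} (hk : k.cells = insert c r.cells) (hc : c ∉ r) :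
    diffBox r k = c := by
  rw [diffBox, hk, insert_sdiff_cancel (by simpa using hc), sup_singleton, id]

lemma hkL_of_cells_eq_insert_of_lt (hk : k.cells = insert (i, j) r.cells) (hc : (i, j) ∉ r)
    {j' : ℕ} (hj' : j' < j) :
    hkL k (i, j') = 1 - qq ^ (armLen r (i, j') + 1) * tt ^ (legLen r (i, j') + 1) := by
  have hrow := rowLen_of_cells_eq_insert hk hc
  have hrow' := rowLen_succ_of_cells_eq_insert hk hc
  simp only at hrow hrow'
  rw [hkL, armLen, armLen, legLen, legLen, hrow, hrow',
    colLen_of_cells_eq_insert_of_ne hk hj'.ne]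
  congr 3
  omega

lemma hkA_of_cells_eq_insert_of_lt (hk : k.cells = insert (i, j) r.cells) (hc : (i, j) ∉ r)
    {i' : ℕ} (hi' : i' < i) :
    hkA k (i', j) = 1 - qq ^ (armLen r (i', j) + 1) * tt ^ (legLen r (i', j) + 1) := by
  have hcol := colLen_of_cells_eq_insert hk hc
  have hcol' := colLen_succ_of_cells_eq_insert hk hc
  simp only at hcol hcol'
  rw [hkA, armLen, armLen, legLen, legLen, hcol, hcol',
    rowLen_of_cells_eq_insert_of_ne hk hi'.ne]
  congr 3
  omega

theorem alphaE_of_cells_eq_insert (hk : k.cells = insert (i, j) r.cells) (hc : (i, j) ∉ r) :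
    alphaE r k =
      (∏ j' ∈ range j, (1 - qq ^ armLen r (i, j') * tt ^ (legLen r (i, j') + 1)) /
          (1 - qq ^ (armLen r (i, j') + 1) * tt ^ (legLen r (i, j') + 1))) *
        ∏ i' ∈ range i, (1 - qq ^ (armLen r (i', j) + 1) * tt ^ legLen r (i', j)) /
          (1 - qq ^ (armLen r (i', j) + 1) * tt ^ (legLen r (i', j) + 1)) := by
  have hrow : rowCells r k = r.row i := by rw [rowCells, diffBox_of_cells_eq_insert hk hc]; rfl
  have hcol : colCells r k = r.col j := by rw [colCells, diffBox_of_cells_eq_insert hk hc]; rfl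
  rw [alphaE, hrow, hcol, row_eq_prod, col_eq_prod, rowLen_of_cells_eq_insert hk hc,
    colLen_of_cells_eq_insert hk hc, prod_product, prod_singleton, prod_product_right,
    prod_singleton]
  congr 1
  · refine prod_congr rfl fun j' hj' => ?_
    rw [hkL_of_cells_eq_insert_of_lt hk hc (mem_range.1 hj'), hkL]
  · refine prod_congr rfl fun i' hi' => ?_
    rw [hkA_of_cells_eq_insert_of_lt hk hc (mem_range.1 hi'), hkA]

end AddBox

lemma etaE_corner_first_row (V H : ℕ) :
    etaE (V, H) (0, H + 1) = qq * tt ^ V * tt ^ (V + 1) * ((1 - qq) * (1 - tt)) /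
      ((1 - qq * tt ^ V) * (1 - tt ^ (V + 1))) := by
  rw [etaE]
  push_cast
  rw [show (H - (H + 1) : ℤ) = -1 by ring, show (0 - V : ℤ) = -(V : ℤ) by ring,
    show (-1 + 1 : ℤ) = 0 by ring, show (-V - 1 : ℤ) = -((V + 1 : ℕ) : ℤ) by push_cast; ring]
  simp only [zpow_neg, zpow_natCast, zpow_zero, zpow_one, one_mul]
  have hqt := one_sub_qq_mul_tt_pow_ne_zero V
  have ht := one_sub_tt_pow_ne_zero V.add_one_ne_zero
  have := qq_ne_zero
  have := tt_ne_zero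
  have : qq * tt ^ V - 1 ≠ 0 := fun h0 => hqt (by linear_combination -h0)
  have : tt ^ (V + 1) - 1 ≠ 0 := fun h0 => ht (by linear_combination -h0)
  field_simp
  ring

lemma etaE_corner_first_col (V H : ℕ) :
    etaE (V, H) (V + 1, 0) = (1 - qq) * (1 - tt) / ((1 - qq ^ H * tt) * (1 - qq ^ (H + 1))) := by
  rw [etaE]
  push_cast
  rw [show (H - 0 : ℤ) = (H : ℤ) by ring, show (V + 1 - V : ℤ) = 1 by ring,
    show (H + 1 : ℤ) = ((H + 1 : ℕ) : ℤ) by push_cast; ring, show (1 - 1 : ℤ) = 0 by ring]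
  simp only [zpow_natCast, zpow_one, zpow_zero, mul_one]

section Rectangle

variable {h v : ℕ} {l m n : YoungDiagram}

lemma rowLen_of_cells_eq_range_prod (hl : l.cells = range v ×ˢ range h) {i : ℕ} (hi : i < v) :
    l.rowLen i = h :=
  rowLen_eq_of_forall_mem_iff fun j => by simp [← mem_cells, hl, hi]

lemma colLen_of_cells_eq_range_prod (hl : l.cells = range v ×ˢ range h) {j : ℕ} (hj : j < h) :
    l.colLen j = v :=
  colLen_eq_of_forall_mem_iff fun i => by simp [← mem_cells, hl, hj]

lemma cells_eq_insert_corner (hl : l.cells = range v ×ˢ range h)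
    (hm : m.cells = l.cells.erase (v - 1, h - 1)) (hh : 0 < h) (hv : 0 < v) :
    l.cells = insert (v - 1, h - 1) m.cells := by
  rw [hm, insert_erase]
  simp [hl, hh, hv]

theorem alphaE_of_cells_eq_range_prod_insert_right
    (hl : l.cells = range v ×ˢ range h) (hn : n.cells = insert (0, h) l.cells) (hv : 0 < v) :
    alphaE l n = (1 - tt ^ v) / (1 - qq ^ h * tt ^ v) := by
  have hc : (0, h) ∉ l := by simp [← mem_cells, hl]
  rw [alphaE_of_cells_eq_insert hn hc, range_zero, prod_empty, mul_one]
  calc _ = ∏ j ∈ range h, (1 - qq ^ (h - (j + 1)) * tt ^ v) / (1 - qq ^ (h - j) * tt ^ v) := by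
        refine prod_congr rfl fun j hj => ?_
        rw [mem_range] at hj
        rw [armLen, legLen, rowLen_of_cells_eq_range_prod hl hv,
          colLen_of_cells_eq_range_prod hl hj, show h - (j + 1) + 1 = h - j by omega,
          show v - (0 + 1) + 1 = v by omega]
    _ = _ := by
        simpa using prod_range_reflect_div_of_ne_zero (f := fun a => 1 - qq ^ a * tt ^ v)
          (n := h) fun k _ => one_sub_qq_pow_mul_tt_pow_ne_zero (.inr hv.ne')

theorem alphaE_of_cells_eq_range_prod_insert_below
    (hl : l.cells = range v ×ˢ range h) (hn : n.cells = insert (v, 0) l.cells) (hh : 0 < h) :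
    alphaE l n = (1 - qq ^ h) / (1 - qq ^ h * tt ^ v) := by
  have hc : (v, 0) ∉ l := by simp [← mem_cells, hl]
  rw [alphaE_of_cells_eq_insert hn hc, range_zero, prod_empty, one_mul]
  calc _ = ∏ i ∈ range v, (1 - qq ^ h * tt ^ (v - (i + 1))) / (1 - qq ^ h * tt ^ (v - i)) := by
        refine prod_congr rfl fun i hi => ?_
        rw [mem_range] at hi
        rw [armLen, legLen, rowLen_of_cells_eq_range_prod hl hi,
          colLen_of_cells_eq_range_prod hl hh, show v - (i + 1) + 1 = v - i by omega,
          show h - (0 + 1) + 1 = h by omega]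
    _ = _ := by
        simpa using prod_range_reflect_div_of_ne_zero (f := fun b => 1 - qq ^ h * tt ^ b)
          (n := v) fun k _ => one_sub_qq_pow_mul_tt_pow_ne_zero (.inl hh.ne')

theorem alphaE_of_cells_eq_range_prod_erase_corner
    (hl : l.cells = range v ×ˢ range h) (hm : m.cells = l.cells.erase (v - 1, h - 1))
    (hh : 0 < h) (hv : 0 < v) :
    alphaE m l = (1 - tt) / (1 - qq ^ (h - 1) * tt) * ((1 - qq) / (1 - qq * tt ^ (v - 1))) := by
  have hlm := cells_eq_insert_corner hl hm hh hv
  have hc : (v - 1, h - 1) ∉ m := by rw [← mem_cells, hm]; exact notMem_erase _ _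
  have hrow := rowLen_of_cells_eq_insert hlm hc
  have hcol := colLen_of_cells_eq_insert hlm hc
  simp only at hrow hcol
  rw [alphaE_of_cells_eq_insert hlm hc]
  congr 1
  · calc _ = ∏ j ∈ range (h - 1),
          (1 - qq ^ (h - 1 - (j + 1)) * tt) / (1 - qq ^ (h - 1 - j) * tt) := by
          refine prod_congr rfl fun j hj => ?_
          rw [mem_range] at hj
          simp only [armLen, legLen]
          rw [hrow, ← colLen_of_cells_eq_insert_of_ne hlm (by simp; omega),
            colLen_of_cells_eq_range_prod hl (by omega),
            show h - 1 - (j + 1) + 1 = h - 1 - j by omega,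
            show v - (v - 1 + 1) + 1 = 1 by omega, pow_one]
      _ = _ := by
          simpa using prod_range_reflect_div_of_ne_zero (f := fun a => 1 - qq ^ a * tt)
            (n := h - 1) fun k _ => one_sub_qq_pow_mul_tt_ne_zero k
  · calc _ = ∏ i ∈ range (v - 1),
          (1 - qq * tt ^ (v - 1 - (i + 1))) / (1 - qq * tt ^ (v - 1 - i)) := by
          refine prod_congr rfl fun i hi => ?_
          rw [mem_range] at hi
          simp only [armLen, legLen]
          rw [hcol, ← rowLen_of_cells_eq_insert_of_ne hlm (by simp; omega),
            rowLen_of_cells_eq_range_prod hl (by omega),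
            show v - 1 - (i + 1) + 1 = v - 1 - i by omega,
            show h - (h - 1 + 1) + 1 = 1 by omega, pow_one]
      _ = _ := by
          simpa using prod_range_reflect_div_of_ne_zero (f := fun b => 1 - qq * tt ^ b)
            (n := v - 1) fun k _ => one_sub_qq_mul_tt_pow_ne_zero k

theorem Ptop_of_cells_eq_range_prod_insert_right (hl : l.cells = range v ×ˢ range h)
    (hn : n.cells = insert (0, h) l.cells) (hv : 0 < v) :
    Ptop l n = (1 - tt ^ v) / (1 - qq ^ h * tt ^ v) := by
  rw [Ptop, diffBox_of_cells_eq_insert hn (by simp [← mem_cells, hl]),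
    alphaE_of_cells_eq_range_prod_insert_right hl hn hv, pow_zero, one_mul]

theorem Ptop_of_cells_eq_range_prod_insert_below (hl : l.cells = range v ×ˢ range h)
    (hn : n.cells = insert (v, 0) l.cells) (hh : 0 < h) :
    Ptop l n = tt ^ v * (1 - qq ^ h) / (1 - qq ^ h * tt ^ v) := by
  rw [Ptop, diffBox_of_cells_eq_insert hn (by simp [← mem_cells, hl]),
    alphaE_of_cells_eq_range_prod_insert_below hl hn hh, mul_div_assoc]

theorem Pmove_of_cells_eq_range_prod_insert_right (hl : l.cells = range v ×ˢ range h)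
    (hm : m.cells = l.cells.erase (v - 1, h - 1)) (hn : n.cells = insert (0, h) l.cells)
    (hh : 0 < h) (hv : 0 < v) :
    Pmove l m n = qq * tt ^ (v - 1) * (1 - qq ^ (h - 1) * tt) / (1 - qq ^ h * tt ^ v) := by
  have hcm : (v - 1, h - 1) ∉ m := by rw [← mem_cells, hm]; exact notMem_erase _ _
  rw [Pmove, diffBox_of_cells_eq_insert hn (by simp [← mem_cells, hl]),
    diffBox_of_cells_eq_insert (cells_eq_insert_corner hl hm hh hv) hcm,
    alphaE_of_cells_eq_range_prod_insert_right hl hn hv,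
    alphaE_of_cells_eq_range_prod_erase_corner hl hm hh hv]
  obtain ⟨H, rfl⟩ := Nat.exists_eq_add_one_of_ne_zero hh.ne'
  obtain ⟨V, rfl⟩ := Nat.exists_eq_add_one_of_ne_zero hv.ne'
  simp only [Nat.add_sub_cancel]
  rw [etaE_corner_first_row, show ((0 : ℕ) : ℤ) - V - 1 = -((V + 1 : ℕ) : ℤ) by push_cast; ring,
    zpow_neg, zpow_natCast]
  have := tt_ne_zero
  have := one_sub_qq_ne_zero
  have := one_sub_tt_ne_zero
  have := one_sub_qq_mul_tt_pow_ne_zero V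
  have := one_sub_tt_pow_ne_zero V.add_one_ne_zero
  field_simp

theorem Pmove_of_cells_eq_range_prod_insert_below (hl : l.cells = range v ×ˢ range h)
    (hm : m.cells = l.cells.erase (v - 1, h - 1)) (hn : n.cells = insert (v, 0) l.cells)
    (hh : 0 < h) (hv : 0 < v) :
    Pmove l m n = (1 - qq * tt ^ (v - 1)) / (1 - qq ^ h * tt ^ v) := by
  have hcm : (v - 1, h - 1) ∉ m := by rw [← mem_cells, hm]; exact notMem_erase _ _
  rw [Pmove, diffBox_of_cells_eq_insert hn (by simp [← mem_cells, hl]),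
    diffBox_of_cells_eq_insert (cells_eq_insert_corner hl hm hh hv) hcm,
    alphaE_of_cells_eq_range_prod_insert_below hl hn hh,
    alphaE_of_cells_eq_range_prod_erase_corner hl hm hh hv]
  obtain ⟨H, rfl⟩ := Nat.exists_eq_add_one_of_ne_zero hh.ne'
  obtain ⟨V, rfl⟩ := Nat.exists_eq_add_one_of_ne_zero hv.ne'
  simp only [Nat.add_sub_cancel]
  rw [etaE_corner_first_col, show ((V + 1 : ℕ) : ℤ) - V - 1 = 0 by push_cast; ring, zpow_zero,
    one_mul]
  have := one_sub_qq_ne_zero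
  have := one_sub_tt_ne_zero
  have := one_sub_qq_pow_ne_zero H.add_one_ne_zero
  have : 1 - tt * qq ^ H ≠ 0 := mul_comm (qq ^ H) tt ▸ one_sub_qq_pow_mul_tt_ne_zero H
  field_simp

end Rectangle

/-- the probabilities for a rectangle `λ = (h^v)`, with
`μ = (h^{v-1}, h-1)`, `ν₁ = (h+1, h^{v-1})`, `ν₂ = (h^v, 1)`. -/
theorem rectangle_probabilities (h v : ℕ) (hh : 1 ≤ h) (hv : 1 ≤ v)
    (l m n1 n2 : YoungDiagram)
    (hl : l.cells = Finset.range v ×ˢ Finset.range h)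
    (hm : m.cells = l.cells.erase (v - 1, h - 1))
    (hn1 : n1.cells = insert (0, h) l.cells)
    (hn2 : n2.cells = insert (v, 0) l.cells) :
    Ptop l n1 = (1 - tt ^ v) / (1 - qq ^ h * tt ^ v) ∧
    Ptop l n2 = tt ^ v * (1 - qq ^ h) / (1 - qq ^ h * tt ^ v) ∧
    Pmove l m n1 = qq * tt ^ (v - 1) * (1 - qq ^ (h - 1) * tt) / (1 - qq ^ h * tt ^ v) ∧
    Pmove l m n2 = (1 - qq * tt ^ (v - 1)) / (1 - qq ^ h * tt ^ v) ∧
    Ptop l n1 + Ptop l n2 = 1 ∧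
    Pmove l m n1 + Pmove l m n2 = 1 := by
  have htop1 := Ptop_of_cells_eq_range_prod_insert_right hl hn1 hv
  have htop2 := Ptop_of_cells_eq_range_prod_insert_below hl hn2 hh
  have hmove1 := Pmove_of_cells_eq_range_prod_insert_right hl hm hn1 hh hv
  have hmove2 := Pmove_of_cells_eq_range_prod_insert_below hl hm hn2 hh hv
  have hden : 1 - qq ^ h * tt ^ v ≠ 0 := one_sub_qq_pow_mul_tt_pow_ne_zero (.inr (by omega))
  refine ⟨htop1, htop2, hmove1, hmove2, ?_, ?_⟩
  · rw [htop1, htop2, ← add_div, div_eq_one_iff_eq hden]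
    ring
  · obtain ⟨H, rfl⟩ := Nat.exists_eq_add_one_of_ne_zero (by omega : h ≠ 0)
    obtain ⟨V, rfl⟩ := Nat.exists_eq_add_one_of_ne_zero (by omega : v ≠ 0)
    rw [hmove1, hmove2, ← add_div, div_eq_one_iff_eq hden]
    simp only [Nat.add_sub_cancel]
    ring
end

section
/- For every partition λ and μ ∈ 𝒟(λ), ν ∈ 𝒰(λ), there is a unique cell c_{μ,ν} of λ lying either in the row of the added box ν/λ and the column of the removed box λ/μ, or in the column of ν/λ and the row of λ/μ. -/
theorem existsUnique_and_eq_or_eq_of_xor {α : Type*} {p : α → Prop} {x y : α}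
    (h : Xor (p x) (p y)) : ∃! c, p c ∧ (c = x ∨ c = y) := by
  rcases h with ⟨hx, hy⟩ | ⟨hy, hx⟩
  · exact ⟨x, ⟨hx, .inl rfl⟩, by rintro c ⟨hc, rfl | rfl⟩ <;> tauto⟩
  · exact ⟨y, ⟨hy, .inr rfl⟩, by rintro c ⟨hc, rfl | rfl⟩ <;> tauto⟩

namespace YoungDiagram

variable {γ : YoungDiagram} {a b : ℕ × ℕ}

theorem mem_or_mem_of_minimal (ha : a ∈ γ) (hb : Minimal (· ∉ γ) b) :
    (b.1, a.2) ∈ γ ∨ (a.1, b.2) ∈ γ := by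
  rcases le_or_gt b.2 a.2 with hle | hlt
  · exact .inr (γ.isLowerSet (Prod.mk_le_mk.2 ⟨le_rfl, hle⟩) ha)
  · exact .inl (not_not.1 (hb.not_prop_of_lt (Prod.mk_lt_mk_iff_right.2 hlt)))

theorem not_mem_and_mem_of_maximal (ha : Maximal (· ∈ γ) a) (hb : b ∉ γ) :
    ¬((b.1, a.2) ∈ γ ∧ (a.1, b.2) ∈ γ) := by
  rintro ⟨hba, hab⟩
  rcases le_or_gt b.1 a.1 with hle | hlt
  · exact hb (γ.isLowerSet (Prod.mk_le_mk.2 ⟨hle, le_rfl⟩) hab)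
  · exact ha.not_prop_of_gt (Prod.mk_lt_mk_iff_left.2 hlt) hba

theorem xor_mem_of_maximal_of_minimal (ha : Maximal (· ∈ γ) a) (hb : Minimal (· ∉ γ) b) :
    Xor ((b.1, a.2) ∈ γ) ((a.1, b.2) ∈ γ) :=
  (xor_iff_or_and_not_and _ _).2
    ⟨mem_or_mem_of_minimal ha.prop hb, not_mem_and_mem_of_maximal ha hb.prop⟩

end YoungDiagram

namespace YDCovers

variable {m l n : YoungDiagram}

theorem sdiff_eq_singleton (h : YDCovers m l) : l.cells \ m.cells = {diffBox m l} := by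
  obtain ⟨a, ha⟩ := Finset.card_eq_one.1 <| by
    rw [Finset.card_sdiff_of_subset h.1, h.2, Nat.add_sub_cancel_left]
  rw [ha, diffBox, ha, Finset.sup_singleton, id]

theorem mem_sdiff_iff (h : YDCovers m l) {c : ℕ × ℕ} :
    c ∈ l ∧ c ∉ m ↔ c = diffBox m l := by
  simpa only [Finset.mem_sdiff, YoungDiagram.mem_cells, Finset.mem_singleton] using
    Finset.ext_iff.1 h.sdiff_eq_singleton c

theorem maximal_diffBox (h : YDCovers m l) : Maximal (· ∈ l) (diffBox m l) := by
  have hbox := h.mem_sdiff_iff.2 rfl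
  refine ⟨hbox.1, fun c hc hle => (h.mem_sdiff_iff.1 ⟨hc, fun hcm => ?_⟩).le⟩
  exact hbox.2 (m.isLowerSet hle hcm)

theorem minimal_diffBox (h : YDCovers l n) : Minimal (· ∉ l) (diffBox l n) := by
  have hbox := h.mem_sdiff_iff.2 rfl
  exact ⟨hbox.2, fun c hc hle =>
    (h.mem_sdiff_iff.1 ⟨n.isLowerSet hle hbox.1, hc⟩).ge⟩

end YDCovers

/-- for `μ ∈ 𝒟(λ)` and `ν ∈ 𝒰(λ)` there is a unique cell of `λ`
lying in the row of `ν/λ` and the column of `λ/μ`, or in the column of `ν/λ` and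
the row of `λ/μ`. -/
theorem cellC_exists_unique (l m n : YoungDiagram)
    (hm : YDCovers m l) (hn : YDCovers l n) :
    ∃! c : ℕ × ℕ, c ∈ l.cells ∧
      ((c.1 = (diffBox l n).1 ∧ c.2 = (diffBox m l).2) ∨
       (c.2 = (diffBox l n).2 ∧ c.1 = (diffBox m l).1)) := by
  have hxor := YoungDiagram.xor_mem_of_maximal_of_minimal hm.maximal_diffBox hn.minimal_diffBox
  simpa only [Prod.ext_iff, and_comm (a := _ = (diffBox m l).1)] using
    existsUnique_and_eq_or_eq_of_xor (p := (· ∈ l.cells)) hxor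
end
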